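/- Let n ≥ 3 and i ∈ {0,1,2} (indices mod 3). Suppose x̃, ỹ ∈ V_{n−1} \ V_{n−2} are distinct and F_i(x̃), F_i(ỹ) ∉ D^{i+1}_n ∪ D^{i−1}_n, where D^j_n is the set of four n-neighbors in V_n of x_j = (q_{j−1} + q_{j+1})/2. Then the conductances of the sets V_n \ V_{n−1} (computed at level n) and V_{n−1} \ V_{n−2} (computed at level n−1) satisfy c^{V_n \backslash V_{n−1}}_{F_i(x̃), F_i(ỹ)} = (5/3) · c^{V_{n−1} \backslash V_{n−2}}_{x̃, ỹ}. -/

import Mathlib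

open scoped BigOperators

noncomputable section

namespace SGPaper

/-- The three corners of the Sierpinski gasket:
`q₀ = (1/2, √3/2)`, `q₁ = (0,0)`, `q₂ = (1,0)`. -/
def q : Fin 3 → ℝ × ℝ
  | 0 => (1 / 2, Real.sqrt 3 / 2)
  | 1 => (0, 0)
  | 2 => (1, 0)

/-- The contraction map towards corner `i`: `F_i(x) = (x + q_i)/2`. -/
def Fmap (i : Fin 3) (x : ℝ × ℝ) : ℝ × ℝ := (2⁻¹ : ℝ) • (x + q i)

/-- `Fword w = F_{w₁} ∘ ⋯ ∘ F_{w_m}` for the word `w = w₁⋯w_m`. -/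
def Fword (w : List (Fin 3)) : ℝ × ℝ → ℝ × ℝ :=
  w.foldr (fun i f => Fmap i ∘ f) id

/-- The level-`m` vertex set of the Sierpinski gasket:
`V_m = ⋃_{|w| = m} F_w({q₀, q₁, q₂})`. -/
def V (m : ℕ) : Set (ℝ × ℝ) :=
  {x | ∃ w : List (Fin 3), w.length = m ∧ ∃ i : Fin 3, x = Fword w (q i)}

/-- `x` and `y` are `m`-neighbors: they are distinct and belong to a common
level-`m` cell `F_w({q₀, q₁, q₂})`. -/
def Nbr (m : ℕ) (x y : ℝ × ℝ) : Prop :=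
  x ≠ y ∧ ∃ w : List (Fin 3), w.length = m ∧
    (∃ i : Fin 3, x = Fword w (q i)) ∧ (∃ j : Fin 3, y = Fword w (q j))

/-- The value `(u x - u y)²` on the unordered pair `{x, y}`. -/
def edgeVal (u : ℝ × ℝ → ℝ) : Sym2 (ℝ × ℝ) → ℝ :=
  Sym2.lift ⟨fun x y => (u x - u y) ^ 2, fun _ _ => by ring⟩

/-- The unordered pair `e` is an edge of the level-`m` graph `Γ_m`. -/
def IsEdge (m : ℕ) (e : Sym2 (ℝ × ℝ)) : Prop :=
  ∃ x y : ℝ × ℝ, Nbr m x y ∧ e = s(x, y)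

/-- The level-`m` graph energy: `E_m(u) = (5/3)^m Σ (u x − u y)²`, the sum being over
unordered `m`-neighbor pairs `{x, y}` (a finite set, so `tsum` is the honest sum). -/
def Energy (m : ℕ) (u : ℝ × ℝ → ℝ) : ℝ :=
  (5 / 3 : ℝ) ^ m * ∑' e : {e : Sym2 (ℝ × ℝ) // IsEdge m e}, edgeVal u e

/-- `Q_E(v)`: minimal level-`m` energy among functions `u : V_m → ℝ` agreeing
with `v` on `E` (the minimum is attained, so it equals this infimum). -/
def Q (m : ℕ) (E : Set (ℝ × ℝ)) (v : ℝ × ℝ → ℝ) : ℝ :=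
  sInf {r | ∃ u : ℝ × ℝ → ℝ, (∀ x ∈ E, u x = v x) ∧ r = Energy m u}

/-- Indicator function of the point `z`. -/
def ind (z : ℝ × ℝ) : ℝ × ℝ → ℝ := fun t => if t = z then 1 else 0

/-- The conductance `c^E_{x,y} = (Q_E(𝟙_x) + Q_E(𝟙_y) − Q_E(𝟙_x + 𝟙_y))/2`
between `x, y ∈ E`, computed at level `m`. -/
def cond (m : ℕ) (E : Set (ℝ × ℝ)) (x y : ℝ × ℝ) : ℝ :=
  (Q m E (ind x) + Q m E (ind y) - Q m E (ind x + ind y)) / 2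

/-- `x_i = (q_{i−1} + q_{i+1})/2`, the midpoint opposite `q_i` (element of `V₁ \ V₀`). -/
def xmid (i : Fin 3) : ℝ × ℝ := (2⁻¹ : ℝ) • (q (i - 1) + q (i + 1))

/-- `D^i_n`: the set of `n`-neighbors in `V_n` of the midpoint `x_i`. -/
def Dset (n : ℕ) (i : Fin 3) : Set (ℝ × ℝ) := {y | y ∈ V n ∧ Nbr n y (xmid i)}

/-! For a datum `v` on `V_{m+1} \ V_m` vanishing at the neighbours of the corners `q_c`, `c ≠ i`,
the transported datum `v ∘ F_i⁻¹` (zero off the cell `F_i`) on `V_{m+2} \ V_{m+1}` has exactly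
`5/3` times the minimal energy of `v`. Restricting an extension to the cell `F_i` gives `≥`.
Conversely, an extension of `v` may be set to `0` at those corners without raising its energy;
it can then be copied into the cell `F_i` and extended by `0` to the other two cells, which meet
`F_i` only at the images of those corners. The hypothesis on `D^{i±1}_n` says exactly that `x̃`
and `ỹ` are not neighbours of `q_{i±1}`, and the conductance is a combination of three such
minimal energies.

The geometry is done in barycentric coordinates, in which every `F_i` is affine with dyadic
coefficients. -/

/-- Barycentric coordinates with respect to the corners `q 0`, `q 1`, `q 2`. -/
def bary : Fin 3 → ℝ × ℝ → ℝ
  | 0 => fun p => 2 * p.2 / √3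
  | 1 => fun p => 1 - p.1 - p.2 / √3
  | 2 => fun p => p.1 - p.2 / √3

lemma bary_add_bary_add_bary (p : ℝ × ℝ) : bary 0 p + bary 1 p + bary 2 p = 1 := by
  simp only [bary]; ring

lemma bary_q (j k : Fin 3) : bary j (q k) = if j = k then 1 else 0 := by
  have : √3 ≠ 0 := by positivity
  fin_cases j <;> fin_cases k <;> simp [bary, q] <;> field_simp <;> ring

lemma bary_midpoint (j : Fin 3) (x y : ℝ × ℝ) :
    bary j ((2⁻¹ : ℝ) • (x + y)) = (bary j x + bary j y) / 2 := by
  fin_cases j <;> simp only [bary, Prod.smul_fst, Prod.smul_snd, Prod.fst_add, Prod.snd_add,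
    smul_eq_mul] <;> ring

lemma bary_Fmap (j i : Fin 3) (p : ℝ × ℝ) :
    bary j (Fmap i p) = (bary j p + if j = i then 1 else 0) / 2 := by
  rw [Fmap, bary_midpoint, bary_q]

lemma eq_of_bary_eq {x y : ℝ × ℝ} (h0 : bary 0 x = bary 0 y) (h2 : bary 2 x = bary 2 y) :
    x = y := by
  have : √3 ≠ 0 := by positivity
  simp only [bary] at h0 h2
  have h0' : x.2 = y.2 := by field_simp at h0; linarith
  exact Prod.ext (by rw [h0'] at h2; linarith) h0'

def triangle : Set (ℝ × ℝ) := {x | ∀ k, 0 ≤ bary k x}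

lemma q_mem_triangle (c : Fin 3) : q c ∈ triangle := fun k => by
  rw [bary_q]; split <;> norm_num

lemma Fmap_mem_triangle (i : Fin 3) {x : ℝ × ℝ} (hx : x ∈ triangle) : Fmap i x ∈ triangle :=
  fun k => by rw [bary_Fmap]; split <;> linarith [hx k]

lemma Fword_mem_triangle (w : List (Fin 3)) {x : ℝ × ℝ} (hx : x ∈ triangle) :
    Fword w x ∈ triangle := by
  induction w with
  | nil => exact hx
  | cons i w ih => exact Fmap_mem_triangle i ih

lemma V_subset_triangle (m : ℕ) : V m ⊆ triangle := by
  rintro x ⟨w, -, a, rfl⟩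
  exact Fword_mem_triangle w (q_mem_triangle a)

lemma bary_le_one {x : ℝ × ℝ} (hx : x ∈ triangle) (j : Fin 3) : bary j x ≤ 1 := by
  have := bary_add_bary_add_bary x
  fin_cases j <;> simp <;> linarith [hx 0, hx 1, hx 2]

lemma eq_q_of_one_le_bary {x : ℝ × ℝ} {c : Fin 3} (hx : x ∈ triangle) (hc : 1 ≤ bary c x) :
    x = q c := by
  have h : ∀ j, bary j x = bary j (q c) := by
    intro j
    have := bary_add_bary_add_bary x
    rw [bary_q]
    fin_cases c <;> fin_cases j <;> simp at hc ⊢ <;> linarith [hx 0, hx 1, hx 2]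
  exact eq_of_bary_eq (h 0) (h 2)

lemma eq_q_of_Fmap_eq_Fmap {i j : Fin 3} (hij : i ≠ j) {p y : ℝ × ℝ} (hp : p ∈ triangle)
    (hy : y ∈ triangle) (h : Fmap i p = Fmap j y) : p = q j := by
  apply eq_q_of_one_le_bary hp
  have := congrArg (bary j) h
  rw [bary_Fmap, bary_Fmap, if_neg hij.symm, if_pos rfl] at this
  linarith [hy j]

lemma Fword_cons (i : Fin 3) (w : List (Fin 3)) (x : ℝ × ℝ) :
    Fword (i :: w) x = Fmap i (Fword w x) := rfl

lemma Fmap_injective (i : Fin 3) : Function.Injective (Fmap i) := fun x y h =>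
  add_right_cancel (smul_right_injective (ℝ × ℝ) (by norm_num : (2⁻¹ : ℝ) ≠ 0) h)

lemma Fmap_q_self (c : Fin 3) : Fmap c (q c) = q c := by
  rw [Fmap, ← two_smul ℝ (q c), smul_smul]; norm_num

lemma q_mem_V (c : Fin 3) (m : ℕ) : q c ∈ V m := by
  refine ⟨List.replicate m c, List.length_replicate, c, ?_⟩
  induction m with
  | zero => rfl
  | succ m ih => rw [List.replicate_succ, Fword_cons, ← ih, Fmap_q_self]

lemma Fmap_mem_V (i : Fin 3) {m : ℕ} {x : ℝ × ℝ} (hx : x ∈ V m) : Fmap i x ∈ V (m + 1) := by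
  obtain ⟨w, hw, a, rfl⟩ := hx
  exact ⟨i :: w, by simp [hw], a, rfl⟩

lemma mem_V_of_Fmap_mem_V {i : Fin 3} {m : ℕ} {x : ℝ × ℝ} (hx : x ∈ triangle)
    (h : Fmap i x ∈ V (m + 1)) : x ∈ V m := by
  obtain ⟨_ | ⟨c, w⟩, hw, a, ha⟩ := h
  · simp at hw
  · rw [Fword_cons] at ha
    by_cases hci : i = c
    · subst hci
      exact ⟨w, by simpa using hw, a, Fmap_injective i ha⟩
    · rw [eq_q_of_Fmap_eq_Fmap hci hx (Fword_mem_triangle w (q_mem_triangle a)) ha]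
      exact q_mem_V c m

lemma Fmap_mem_V_diff (i : Fin 3) {m : ℕ} {x : ℝ × ℝ} (hx : x ∈ V (m + 1) \ V m) :
    Fmap i x ∈ V (m + 2) \ V (m + 1) :=
  ⟨Fmap_mem_V i hx.1, fun h => hx.2 (mem_V_of_Fmap_mem_V (V_subset_triangle _ hx.1) h)⟩

lemma exists_bary_eq_div_of_mem_V {m : ℕ} {x : ℝ × ℝ} (hx : x ∈ V m) (j : Fin 3) :
    ∃ k : ℤ, bary j x = k / 2 ^ m := by
  obtain ⟨w, rfl, a, rfl⟩ := hx
  induction w with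
  | nil => exact ⟨if j = a then 1 else 0, by
      show bary j (q a) = _
      rw [bary_q]; split <;> simp⟩
  | cons i w ih =>
    obtain ⟨k, hk⟩ := ih
    refine ⟨k + if j = i then 2 ^ w.length else 0, ?_⟩
    rw [Fword_cons, bary_Fmap, hk, List.length_cons, pow_succ]
    split <;> push_cast <;> field_simp
    ring

lemma Nbr.symm {m : ℕ} {x y : ℝ × ℝ} (h : Nbr m x y) : Nbr m y x := by
  obtain ⟨hne, w, hw, ha, hb⟩ := h
  exact ⟨hne.symm, w, hw, hb, ha⟩

lemma Nbr.mem_V {m : ℕ} {x y : ℝ × ℝ} (h : Nbr m x y) : x ∈ V m := by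
  obtain ⟨-, w, hw, ha, -⟩ := h
  exact ⟨w, hw, ha⟩

lemma Nbr.map_Fmap {m : ℕ} (i : Fin 3) {x y : ℝ × ℝ} (h : Nbr m x y) :
    Nbr (m + 1) (Fmap i x) (Fmap i y) := by
  obtain ⟨hne, w, hw, ⟨a, rfl⟩, ⟨b, rfl⟩⟩ := h
  exact ⟨(Fmap_injective i).ne hne, i :: w, by simp [hw], ⟨a, rfl⟩, ⟨b, rfl⟩⟩

lemma one_sub_bary_Fword_of_Fword_eq_q {w : List (Fin 3)} {b c : Fin 3}
    (hw : Fword w (q b) = q c) (a : Fin 3) :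
    1 - bary c (Fword w (q a)) = (1 - bary c (q a)) / 2 ^ w.length := by
  induction w with
  | nil => simp [Fword]
  | cons i w ih =>
    rw [Fword_cons] at hw
    have h1 := congrArg (bary c) hw
    rw [bary_Fmap, bary_q, if_pos rfl] at h1
    have hle := bary_le_one (Fword_mem_triangle w (q_mem_triangle b)) c
    have hci : c = i := by
      by_contra hne
      rw [if_neg hne] at h1
      linarith
    rw [if_pos hci] at h1
    have hcorner := eq_q_of_one_le_bary (Fword_mem_triangle w (q_mem_triangle b)) (by linarith)
    rw [Fword_cons, bary_Fmap, if_pos hci, List.length_cons, pow_succ, div_mul_eq_div_div,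
      ← ih hcorner]
    ring

/-- The coordinate of `x` towards `q c` is `1 - 2^{-(m+1)}`, while points of `V m` have
coordinates in `2^{-m} ℤ`. -/
lemma Nbr.notMem_V_of_q {m : ℕ} {x : ℝ × ℝ} {c : Fin 3} (h : Nbr (m + 1) x (q c)) :
    x ∉ V m := by
  intro hV
  obtain ⟨hne, w, hw, ⟨a, rfl⟩, ⟨b, hb⟩⟩ := h
  have hf := one_sub_bary_Fword_of_Fword_eq_q hb.symm a
  have hca : c ≠ a := by
    rintro rfl
    exact hne (eq_q_of_one_le_bary (Fword_mem_triangle w (q_mem_triangle c))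
      (by rw [bary_q, if_pos rfl, sub_self, zero_div] at hf; linarith))
  rw [bary_q, if_neg hca, hw] at hf
  obtain ⟨k, hk⟩ := exists_bary_eq_div_of_mem_V hV c
  rw [hk, pow_succ] at hf
  field_simp at hf
  have hR : (2 * k : ℝ) = 2 * 2 ^ m - 1 := by linarith
  have hZ : (2 * k : ℤ) = 2 * (2 : ℤ) ^ m - 1 := by exact_mod_cast hR
  omega

lemma IsEdge.map_Fmap {m : ℕ} (i : Fin 3) {e : Sym2 (ℝ × ℝ)} (h : IsEdge m e) :
    IsEdge (m + 1) (e.map (Fmap i)) := by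
  obtain ⟨x, y, hxy, rfl⟩ := h
  exact ⟨Fmap i x, Fmap i y, hxy.map_Fmap i, Sym2.map_mk _ _ _⟩

lemma IsEdge.exists_eq_Fmap {m : ℕ} {e : Sym2 (ℝ × ℝ)} (h : IsEdge (m + 1) e) :
    ∃ c x y, Nbr m x y ∧ e = s(Fmap c x, Fmap c y) := by
  obtain ⟨-, -, ⟨hne, _ | ⟨c, w⟩, hw, ⟨a, rfl⟩, ⟨b, rfl⟩⟩, rfl⟩ := h
  · simp at hw
  · exact ⟨c, Fword w (q a), Fword w (q b), ⟨fun h => hne (by rw [Fword_cons, Fword_cons, h]),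
      w, by simpa using hw, ⟨a, rfl⟩, ⟨b, rfl⟩⟩, rfl⟩

lemma isEdge_finite (m : ℕ) : {e : Sym2 (ℝ × ℝ) | IsEdge m e}.Finite := by
  refine ((List.finite_length_eq (Fin 3) m).prod (Set.finite_univ (α := Fin 3 × Fin 3))).image
    (fun t => s(Fword t.1 (q t.2.1), Fword t.1 (q t.2.2))) |>.subset ?_
  rintro e ⟨x, y, ⟨-, w, hw, ⟨a, rfl⟩, ⟨b, rfl⟩⟩, rfl⟩
  exact ⟨(w, a, b), ⟨hw, Set.mem_univ _⟩, rfl⟩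

def edgeFinset (m : ℕ) : Finset (Sym2 (ℝ × ℝ)) := (isEdge_finite m).toFinset

lemma mem_edgeFinset {m : ℕ} {e : Sym2 (ℝ × ℝ)} : e ∈ edgeFinset m ↔ IsEdge m e :=
  (isEdge_finite m).mem_toFinset

lemma edgeVal_mk (u : ℝ × ℝ → ℝ) (x y : ℝ × ℝ) : edgeVal u s(x, y) = (u x - u y) ^ 2 := rfl

lemma edgeVal_nonneg (u : ℝ × ℝ → ℝ) (e : Sym2 (ℝ × ℝ)) : 0 ≤ edgeVal u e := by
  induction e using Sym2.ind with
  | _ x y => rw [edgeVal_mk]; positivity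

lemma edgeVal_map (f : ℝ × ℝ → ℝ × ℝ) (u : ℝ × ℝ → ℝ) (e : Sym2 (ℝ × ℝ)) :
    edgeVal u (e.map f) = edgeVal (u ∘ f) e := by
  induction e using Sym2.ind with
  | _ x y => rfl

lemma energy_eq_sum (m : ℕ) (u : ℝ × ℝ → ℝ) :
    Energy m u = (5 / 3 : ℝ) ^ m * ∑ e ∈ edgeFinset m, edgeVal u e := by
  rw [Energy, ← Finset.tsum_subtype]
  congr 1
  exact (Equiv.subtypeEquivRight fun e => (mem_edgeFinset (m := m) (e := e)).symm).tsum_eq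
    fun e => edgeVal u e

lemma energy_nonneg (m : ℕ) (u : ℝ × ℝ → ℝ) : 0 ≤ Energy m u := by
  rw [energy_eq_sum]
  exact mul_nonneg (by positivity) (Finset.sum_nonneg fun e _ => edgeVal_nonneg u e)

lemma energy_congr {m : ℕ} {u u' : ℝ × ℝ → ℝ} (h : ∀ x ∈ V m, u x = u' x) :
    Energy m u = Energy m u' := by
  rw [energy_eq_sum, energy_eq_sum]
  congr 1
  refine Finset.sum_congr rfl fun e he => ?_
  obtain ⟨x, y, hxy, rfl⟩ := mem_edgeFinset.mp he
  rw [edgeVal_mk, edgeVal_mk, h x hxy.mem_V, h y hxy.symm.mem_V]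

lemma energy_indicator_V (m : ℕ) (u : ℝ × ℝ → ℝ) : Energy m ((V m).indicator u) = Energy m u :=
  energy_congr fun _ hx => Set.indicator_of_mem hx u

lemma image_Fmap_subset_edgeFinset (m : ℕ) (i : Fin 3) :
    (edgeFinset m).image (Sym2.map (Fmap i)) ⊆ edgeFinset (m + 1) := by
  intro e he
  obtain ⟨e', he', rfl⟩ := Finset.mem_image.mp he
  exact mem_edgeFinset.mpr ((mem_edgeFinset.mp he').map_Fmap i)

lemma sum_image_Fmap_edgeFinset (m : ℕ) (i : Fin 3) (u : ℝ × ℝ → ℝ) :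
    ∑ e ∈ (edgeFinset m).image (Sym2.map (Fmap i)), edgeVal u e
      = ∑ e ∈ edgeFinset m, edgeVal (u ∘ Fmap i) e := by
  rw [Finset.sum_image fun _ _ _ _ h => Sym2.map.injective (Fmap_injective i) h]
  exact Finset.sum_congr rfl fun e _ => edgeVal_map _ u e

lemma five_thirds_mul_energy_comp_Fmap_le (m : ℕ) (i : Fin 3) (u : ℝ × ℝ → ℝ) :
    5 / 3 * Energy m (u ∘ Fmap i) ≤ Energy (m + 1) u := by
  rw [energy_eq_sum, energy_eq_sum, ← mul_assoc, ← pow_succ', ← sum_image_Fmap_edgeFinset]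
  exact mul_le_mul_of_nonneg_left (Finset.sum_le_sum_of_subset_of_nonneg
    (image_Fmap_subset_edgeFinset m i) fun e _ _ => edgeVal_nonneg u e) (by positivity)

lemma energy_eq_five_thirds_mul_energy_comp_Fmap {m : ℕ} {i : Fin 3} {U : ℝ × ℝ → ℝ}
    (h : ∀ e, IsEdge (m + 1) e →
      e ∈ (edgeFinset m).image (Sym2.map (Fmap i)) ∨ edgeVal U e = 0) :
    Energy (m + 1) U = 5 / 3 * Energy m (U ∘ Fmap i) := by
  rw [energy_eq_sum, energy_eq_sum, ← mul_assoc, ← pow_succ', ← sum_image_Fmap_edgeFinset]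
  congr 1
  exact (Finset.sum_subset (image_Fmap_subset_edgeFinset m i)
    fun e he hne => (h e (mem_edgeFinset.mp he)).resolve_left hne).symm

/-- After zeroing, every edge touching `S` carries `0`. -/
lemma energy_indicator_compl_le {m : ℕ} {S : Set (ℝ × ℝ)} {u : ℝ × ℝ → ℝ}
    (h : ∀ x ∈ S, ∀ y, Nbr m x y → u y = 0) : Energy m (Sᶜ.indicator u) ≤ Energy m u := by
  classical
  have hzero : ∀ x y, Nbr m x y → x ∈ S → edgeVal (Sᶜ.indicator u) s(x, y) = 0 := by
    intro x y hxy hx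
    rw [edgeVal_mk, Set.indicator_of_notMem (Set.notMem_compl_iff.mpr hx), Set.indicator_apply]
    split_ifs <;> simp [h x hx y hxy]
  rw [energy_eq_sum, energy_eq_sum]
  gcongr with e he
  obtain ⟨x, y, hxy, rfl⟩ := mem_edgeFinset.mp he
  by_cases hx : x ∈ S
  · rw [hzero x y hxy hx]; exact edgeVal_nonneg u _
  by_cases hy : y ∈ S
  · rw [Sym2.eq_swap, hzero y x hxy.symm hy]; exact edgeVal_nonneg u _
  rw [edgeVal_mk, edgeVal_mk, Set.indicator_of_mem hx, Set.indicator_of_mem hy]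

/-- The cells `F_c`, `c ≠ i`, meet `F_i` only at `F_i (q c)`, where the extension vanishes. -/
lemma energy_extend_Fmap {m : ℕ} {i : Fin 3} {u : ℝ × ℝ → ℝ}
    (hV : ∀ p ∉ V m, u p = 0) (hq : ∀ c ≠ i, u (q c) = 0) :
    Energy (m + 1) (Function.extend (Fmap i) u 0) = 5 / 3 * Energy m u := by
  have hcell : ∀ c ≠ i, ∀ x ∈ triangle, Function.extend (Fmap i) u 0 (Fmap c x) = 0 := by
    intro c hc x hx
    by_cases h : ∃ p, Fmap i p = Fmap c x
    · obtain ⟨p, hp⟩ := h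
      rw [← hp, (Fmap_injective i).extend_apply]
      by_cases hpV : p ∈ V m
      · rw [eq_q_of_Fmap_eq_Fmap hc.symm (V_subset_triangle m hpV) hx hp]
        exact hq c hc
      · exact hV p hpV
    · exact Function.extend_apply' _ _ _ h
  rw [energy_eq_five_thirds_mul_energy_comp_Fmap, Function.extend_comp (Fmap_injective i)]
  intro e he
  obtain ⟨c, x, y, hxy, rfl⟩ := he.exists_eq_Fmap
  by_cases hc : c = i
  · subst hc
    exact Or.inl (Finset.mem_image.mpr ⟨s(x, y), mem_edgeFinset.mpr ⟨x, y, hxy, rfl⟩, rfl⟩)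
  · right
    rw [edgeVal_mk, hcell c hc x (V_subset_triangle m hxy.mem_V),
      hcell c hc y (V_subset_triangle m hxy.symm.mem_V), sub_zero, sq, zero_mul]

lemma Q_le_energy {m : ℕ} {E : Set (ℝ × ℝ)} {v u : ℝ × ℝ → ℝ} (hu : ∀ x ∈ E, u x = v x) :
    Q m E v ≤ Energy m u :=
  csInf_le ⟨0, by rintro r ⟨u', -, rfl⟩; exact energy_nonneg m u'⟩ ⟨u, hu, rfl⟩

lemma le_Q {m : ℕ} {E : Set (ℝ × ℝ)} {v : ℝ × ℝ → ℝ} {c : ℝ}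
    (h : ∀ u : ℝ × ℝ → ℝ, (∀ x ∈ E, u x = v x) → c ≤ Energy m u) : c ≤ Q m E v :=
  le_csInf ⟨Energy m v, v, fun _ _ => rfl, rfl⟩ fun _ ⟨u, hu, hr⟩ => hr ▸ h u hu

lemma five_thirds_mul_Q_le_Q_extend (m : ℕ) (i : Fin 3) (v : ℝ × ℝ → ℝ) :
    5 / 3 * Q (m + 1) (V (m + 1) \ V m) v
      ≤ Q (m + 2) (V (m + 2) \ V (m + 1)) (Function.extend (Fmap i) v 0) := by
  refine le_Q fun u hu => ?_
  calc 5 / 3 * Q (m + 1) (V (m + 1) \ V m) v ≤ 5 / 3 * Energy (m + 1) (u ∘ Fmap i) := by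
        gcongr
        refine Q_le_energy fun p hp => ?_
        rw [Function.comp_apply, hu _ (Fmap_mem_V_diff i hp), (Fmap_injective i).extend_apply]
    _ ≤ Energy (m + 2) u := five_thirds_mul_energy_comp_Fmap_le (m + 1) i u

lemma Q_extend_le_five_thirds_mul_Q {m : ℕ} {i : Fin 3} {v : ℝ × ℝ → ℝ}
    (hv : ∀ p ∉ V (m + 1) \ V m, v p = 0)
    (hcorner : ∀ c ≠ i, ∀ y, Nbr (m + 1) y (q c) → v y = 0) :
    Q (m + 2) (V (m + 2) \ V (m + 1)) (Function.extend (Fmap i) v 0)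
      ≤ 5 / 3 * Q (m + 1) (V (m + 1) \ V m) v := by
  suffices h : 3 / 5 * Q (m + 2) (V (m + 2) \ V (m + 1)) (Function.extend (Fmap i) v 0)
      ≤ Q (m + 1) (V (m + 1) \ V m) v by linarith
  refine le_Q fun u hu => ?_
  set C := q '' {i}ᶜ
  set u₀ := (V (m + 1)).indicator (Cᶜ.indicator u) with hu₀_def
  have hC : ∀ p ∈ C, p ∈ V m := by
    rintro _ ⟨c, -, rfl⟩
    exact q_mem_V c m
  have hu₀ : ∀ p, Fmap i p ∈ V (m + 2) \ V (m + 1) → u₀ p = v p := by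
    intro p hp
    by_cases hpV : p ∈ V (m + 1)
    · have hp' : p ∈ V (m + 1) \ V m := ⟨hpV, fun h => hp.2 (Fmap_mem_V i h)⟩
      rw [hu₀_def, Set.indicator_of_mem hpV,
        Set.indicator_of_mem (show p ∈ Cᶜ from fun h => hp'.2 (hC p h)), hu p hp']
    · rw [hu₀_def, Set.indicator_of_notMem hpV, hv p fun h => hpV h.1]
  have hfeas : ∀ z ∈ V (m + 2) \ V (m + 1),
      Function.extend (Fmap i) u₀ 0 z = Function.extend (Fmap i) v 0 z := by
    intro z hz
    by_cases h : ∃ p, Fmap i p = z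
    · obtain ⟨p, rfl⟩ := h
      rw [(Fmap_injective i).extend_apply, (Fmap_injective i).extend_apply, hu₀ p hz]
    · rw [Function.extend_apply' _ _ _ h, Function.extend_apply' _ _ _ h]
  have hextend : Energy (m + 2) (Function.extend (Fmap i) u₀ 0) = 5 / 3 * Energy (m + 1) u₀ :=
    energy_extend_Fmap (fun p hp => Set.indicator_of_notMem hp _)
      fun c hc => by
        rw [hu₀_def, Set.indicator_of_mem (q_mem_V c _),
          Set.indicator_of_notMem (show q c ∉ Cᶜ from fun h => h ⟨c, hc, rfl⟩)]
  have hzero : Energy (m + 1) (Cᶜ.indicator u) ≤ Energy (m + 1) u := by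
    refine energy_indicator_compl_le ?_
    rintro _ ⟨c, hc, rfl⟩ y hy
    have hy' : y ∈ V (m + 1) \ V m := ⟨hy.symm.mem_V, hy.symm.notMem_V_of_q⟩
    rw [hu y hy', hcorner c hc y hy.symm]
  calc 3 / 5 * Q (m + 2) (V (m + 2) \ V (m + 1)) (Function.extend (Fmap i) v 0)
      ≤ 3 / 5 * Energy (m + 2) (Function.extend (Fmap i) u₀ 0) := by
        gcongr; exact Q_le_energy hfeas
    _ = Energy (m + 1) (Cᶜ.indicator u) := by rw [hextend, energy_indicator_V]; ring
    _ ≤ Energy (m + 1) u := hzero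

lemma Q_extend_eq {m : ℕ} {i : Fin 3} {v : ℝ × ℝ → ℝ} (hv : ∀ p ∉ V (m + 1) \ V m, v p = 0)
    (hcorner : ∀ c ≠ i, ∀ y, Nbr (m + 1) y (q c) → v y = 0) :
    Q (m + 2) (V (m + 2) \ V (m + 1)) (Function.extend (Fmap i) v 0)
      = 5 / 3 * Q (m + 1) (V (m + 1) \ V m) v :=
  (Q_extend_le_five_thirds_mul_Q hv hcorner).antisymm (five_thirds_mul_Q_le_Q_extend m i v)

lemma ind_eq_extend {f : ℝ × ℝ → ℝ × ℝ} (hf : Function.Injective f) (x : ℝ × ℝ) :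
    ind (f x) = Function.extend f (ind x) 0 := by
  funext z
  by_cases h : ∃ p, f p = z
  · obtain ⟨p, rfl⟩ := h
    simp only [hf.extend_apply, ind, hf.eq_iff]
  · rw [Function.extend_apply' _ _ _ h, ind, if_neg fun hz => h ⟨x, hz.symm⟩, Pi.zero_apply]

lemma Fmap_q_eq_xmid {i c : Fin 3} (hc : c ≠ i) :
    Fmap i (q c) = xmid (i + 1) ∨ Fmap i (q c) = xmid (i - 1) := by
  obtain rfl | rfl : c = i + 1 ∨ c = i - 1 := by revert c i; decide
  · right
    rw [xmid, show i - 1 - 1 = i + 1 by revert i; decide, sub_add_cancel, Fmap]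
  · left
    rw [xmid, add_sub_cancel_right, show i + 1 + 1 = i - 1 by revert i; decide, Fmap, add_comm]

lemma not_nbr_q_of_Fmap_notMem_Dset {m : ℕ} {i : Fin 3} {x : ℝ × ℝ}
    (hD : Fmap i x ∉ Dset (m + 2) (i + 1) ∪ Dset (m + 2) (i - 1)) {c : Fin 3} (hc : c ≠ i) :
    ¬Nbr (m + 1) x (q c) := by
  intro h
  have hFx : Fmap i x ∈ V (m + 2) := Fmap_mem_V i h.mem_V
  rcases Fmap_q_eq_xmid hc with he | he
  · exact hD (Or.inl ⟨hFx, he ▸ h.map_Fmap i⟩)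
  · exact hD (Or.inr ⟨hFx, he ▸ h.map_Fmap i⟩)

theorem stmt9_general (n : ℕ) (i : Fin 3) (xt yt : ℝ × ℝ)
    (hx : xt ∈ V (n - 1) \ V (n - 2)) (hy : yt ∈ V (n - 1) \ V (n - 2))
    (hxD : Fmap i xt ∉ Dset n (i + 1) ∪ Dset n (i - 1))
    (hyD : Fmap i yt ∉ Dset n (i + 1) ∪ Dset n (i - 1)) :
    cond n (V n \ V (n - 1)) (Fmap i xt) (Fmap i yt) =
      5 / 3 * cond (n - 1) (V (n - 1) \ V (n - 2)) xt yt := by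
  obtain ⟨m, rfl⟩ : ∃ m, n = m + 2 := ⟨n - 2, by
    -- for `n ≤ 1` truncated subtraction gives `n - 1 = n - 2`, so `hx` is impossible
    by_contra h
    rw [show n - 1 = n - 2 by omega, Set.sdiff_self] at hx
    exact hx⟩
  rw [show m + 2 - 1 = m + 1 from rfl, show m + 2 - 2 = m from rfl] at hx hy ⊢
  have hscale : ∀ v : ℝ × ℝ → ℝ, (∀ p, p ≠ xt → p ≠ yt → v p = 0) →
      Q (m + 2) (V (m + 2) \ V (m + 1)) (Function.extend (Fmap i) v 0)
        = 5 / 3 * Q (m + 1) (V (m + 1) \ V m) v := fun v hv =>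
    Q_extend_eq (fun p hp => hv p (by rintro rfl; exact hp hx) (by rintro rfl; exact hp hy))
      fun c hc y hyc => hv y (by rintro rfl; exact not_nbr_q_of_Fmap_notMem_Dset hxD hc hyc)
        (by rintro rfl; exact not_nbr_q_of_Fmap_notMem_Dset hyD hc hyc)
  have hsum : ind (Fmap i xt) + ind (Fmap i yt) = Function.extend (Fmap i) (ind xt + ind yt) 0 := by
    rw [ind_eq_extend (Fmap_injective i), ind_eq_extend (Fmap_injective i),
      ← Function.extend_add, add_zero]
  rw [cond, cond, hsum, ind_eq_extend (Fmap_injective i), ind_eq_extend (Fmap_injective i),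
    hscale (ind xt) fun p h _ => if_neg h, hscale (ind yt) fun p _ h => if_neg h,
    hscale (ind xt + ind yt) fun p h h' => by simp [ind, h, h']]
  ring

/-- For `n ≥ 3`, distinct `x̃, ỹ ∈ V_{n−1} \ V_{n−2}` with
`F_i(x̃), F_i(ỹ) ∉ D^{i+1}_n ∪ D^{i−1}_n`:
`c^{V_n \ V_{n−1}}_{F_i x̃, F_i ỹ} = (5/3) c^{V_{n−1} \ V_{n−2}}_{x̃, ỹ}`. -/
theorem stmt9 (n : ℕ) (hn : 3 ≤ n) (i : Fin 3) (xt yt : ℝ × ℝ)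
    (hx : xt ∈ V (n - 1) \ V (n - 2)) (hy : yt ∈ V (n - 1) \ V (n - 2)) (hxy : xt ≠ yt)
    (hxD : Fmap i xt ∉ Dset n (i + 1) ∪ Dset n (i - 1))
    (hyD : Fmap i yt ∉ Dset n (i + 1) ∪ Dset n (i - 1)) :
    cond n (V n \ V (n - 1)) (Fmap i xt) (Fmap i yt) =
      5 / 3 * cond (n - 1) (V (n - 1) \ V (n - 2)) xt yt :=
  stmt9_general n i xt yt hx hy hxD hyD

end SGPaper
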